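/- Let M be a countable homogeneous structure with a stationary weak independence relation. Let g₁, g₂, g₃, g₄ ∈ Aut(M) with g₁ and g₄⁻¹ moving almost L-maximally and g₂⁻¹ and g₃ moving almost R-maximally. Let Y₀, ..., Y₄ be finite sets with g_i(Y_{i-1}) = Y_i for i = 1,...,4, and suppose Y₀ ⫫_{Y₁} Y₂ and Y₄ ⫫_{Y₃} Y₂. Let x₀, x₄ be tuples such that g₄g₃g₂g₁ maps tp(x₀/Y₀) to tp(x₄/Y₄). Then for i = 1,...,4 there exist a_i ∈ Aut(M) fixing Y_{i-1} ∪ Y_i pointwise such that g₄^{a₄} g₃^{a₃} g₂^{a₂} g₁^{a₁}(x₀) = x₄. -/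

import Mathlib

variable {M : Type*} [DecidableEq M]

/-- The finite set of coordinates of a tuple. -/
def tset {n : ℕ} (x : Fin n → M) : Finset M := Finset.univ.image x

/-- Two tuples realise the same type over the finite set `B` (types = orbits of the
pointwise stabiliser of `B` in the automorphism group `G`, by homogeneity). -/
def SameTypeOver (G : Subgroup (Equiv.Perm M)) (B : Finset M) {n : ℕ}
    (x y : Fin n → M) : Prop :=
  ∃ g ∈ G, (∀ b ∈ B, g b = b) ∧ ∀ i, g (x i) = y i

/-- `indep` is a stationary weak independence relation on `M` (with automorphism
group `G`): invariance, monotonicity, transitivity, existence and stationarity,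
each in left and right form; symmetry is NOT assumed. -/
structure IsSWIR (G : Subgroup (Equiv.Perm M))
    (indep : Finset M → Finset M → Finset M → Prop) : Prop where
  invariance : ∀ g ∈ G, ∀ A B C : Finset M,
    indep A B C → indep (A.image g) (B.image g) (C.image g)
  monotone_right : ∀ A B C D : Finset M,
    indep A B (C ∪ D) → indep A B C ∧ indep A (B ∪ C) D
  monotone_left : ∀ A B C D : Finset M,
    indep (A ∪ D) B C → indep A B C ∧ indep D (A ∪ B) C
  trans_right : ∀ A B C D : Finset M, indep A B C → indep A (B ∪ C) D → indep A B D
  trans_left : ∀ A B C D : Finset M, indep A B C → indep D (A ∪ B) C → indep D B C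
  exists_right : ∀ (B C : Finset M) (n : ℕ) (x : Fin n → M),
    ∃ a : Fin n → M, SameTypeOver G B x a ∧ indep (tset a) B C
  exists_left : ∀ (B C : Finset M) (n : ℕ) (x : Fin n → M),
    ∃ a : Fin n → M, SameTypeOver G B x a ∧ indep C B (tset a)
  stationary_right : ∀ (B C : Finset M) (n : ℕ) (x y : Fin n → M),
    SameTypeOver G B x y → indep (tset x) B C → indep (tset y) B C →
    SameTypeOver G (B ∪ C) x y
  stationary_left : ∀ (B C : Finset M) (n : ℕ) (x y : Fin n → M),
    SameTypeOver G B x y → indep C B (tset x) → indep C B (tset y) →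
    SameTypeOver G (B ∪ C) x y

/-- `g` moves almost R-maximally: every type over a finite `X` has a realisation `a`
with `a ⫫_X g(a)`. -/
def MovesAlmostRMax (G : Subgroup (Equiv.Perm M))
    (indep : Finset M → Finset M → Finset M → Prop) (g : Equiv.Perm M) : Prop :=
  ∀ (X : Finset M) (n : ℕ) (x : Fin n → M),
    ∃ a : Fin n → M, SameTypeOver G X x a ∧
      indep (tset a) X (tset (fun i => g (a i)))

/-- `g` moves almost L-maximally: every type over a finite `X` has a realisation `a`
with `g(a) ⫫_X a`. -/
def MovesAlmostLMax (G : Subgroup (Equiv.Perm M))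
    (indep : Finset M → Finset M → Finset M → Prop) (g : Equiv.Perm M) : Prop :=
  ∀ (X : Finset M) (n : ℕ) (x : Fin n → M),
    ∃ a : Fin n → M, SameTypeOver G X x a ∧
      indep (tset (fun i => g (a i))) X (tset a)

/-!
The outer conjugates are chosen freely: since `g₁` moves almost L-maximally, a conjugate of `g₁`
by an automorphism fixing `Y₀ ∪ Y₁` sends `x₀` to some `x₁ ⫫_{Y₀Y₁} Y₂`, and `Y₀ ⫫_{Y₁} Y₂`
improves this to `x₁ ⫫_{Y₁} Y₂`; likewise `g₄⁻¹` sends `x₄` to some `x₃ ⫫_{Y₃} Y₂`. Pick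
`x₂ ≡_{Y₂} g₂ x₁` independent over `Y₂` from everything in sight. Stationarity over `Y₁` and over
`Y₃` gives `g₂⁻¹ x₂ ≡_{Y₁Y₂} x₁` and `g₃ x₂ ≡_{Y₂Y₃} x₃`, and the inner conjugates can then be
made exact: when `g` moves almost R-maximally, `g x ≡_B y` and `x ⫫_B y`, stationarity over
`B ∪ x` corrects a conjugate of `g` fixing `B` so that it sends `x` to `y`.
-/

lemma mem_tset {n : ℕ} (x : Fin n → M) (i : Fin n) : x i ∈ tset x :=
  Finset.mem_image_of_mem x (Finset.mem_univ i)

lemma tset_comp {n : ℕ} (f : M → M) (x : Fin n → M) :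
    tset (fun i => f (x i)) = (tset x).image f := by
  simp only [tset, Finset.image_image]
  rfl

lemma tset_append {n k : ℕ} (x : Fin n → M) (e : Fin k → M) :
    tset (Fin.append x e) = tset x ∪ tset e := by
  ext m
  simp only [tset, Finset.mem_union, Finset.mem_image, Finset.mem_univ, true_and]
  constructor
  · rintro ⟨i, rfl⟩
    cases i using Fin.addCases <;> simp
  · rintro (⟨i, rfl⟩ | ⟨i, rfl⟩)
    exacts [⟨Fin.castAdd k i, Fin.append_left x e i⟩, ⟨Fin.natAdd n i, Fin.append_right x e i⟩]

lemma exists_tset_eq (Z : Finset M) : ∃ (k : ℕ) (e : Fin k → M), tset e = Z :=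
  ⟨Z.card, fun i => Z.equivFin.symm i, by ext m; simp [tset, Z.equivFin.symm.exists_congr_left]⟩

lemma Finset.image_perm_inv_of_image_eq {g : Equiv.Perm M} {s t : Finset M}
    (h : s.image g = t) : t.image ⇑g⁻¹ = s := by
  subst h
  simp [Finset.image_image, Function.comp_def]

lemma Equiv.Perm.conj_inv_apply_eq_iff {α : Type*} {a g : Equiv.Perm α} {x y : α} :
    (a * g⁻¹ * a⁻¹) x = y ↔ (a * g * a⁻¹) y = x := by
  rw [show a * g⁻¹ * a⁻¹ = (a * g * a⁻¹)⁻¹ by group]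
  exact Equiv.Perm.inv_eq_iff_eq.trans eq_comm

namespace SameTypeOver

variable {α : Type*} {G : Subgroup (Equiv.Perm α)} {B B' : Finset α} {n : ℕ} {x y z : Fin n → α}

protected lemma symm (h : SameTypeOver G B x y) : SameTypeOver G B y x := by
  obtain ⟨a, ha, hB, hxy⟩ := h
  exact ⟨a⁻¹, G.inv_mem ha, fun m hm => Equiv.Perm.inv_eq_iff_eq.2 (hB m hm).symm,
    fun i => Equiv.Perm.inv_eq_iff_eq.2 (hxy i).symm⟩

protected lemma trans (h : SameTypeOver G B x y) (h' : SameTypeOver G B y z) :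
    SameTypeOver G B x z := by
  obtain ⟨a, ha, hB, hxy⟩ := h
  obtain ⟨a', ha', hB', hyz⟩ := h'
  exact ⟨a' * a, G.mul_mem ha' ha, fun m hm => by simp [hB m hm, hB' m hm],
    fun i => by simp [hxy i, hyz i]⟩

lemma map [DecidableEq α] {g : Equiv.Perm α} (hg : g ∈ G) (hB : B.image g = B')
    (h : SameTypeOver G B x y) :
    SameTypeOver G B' (fun i => g (x i)) (fun i => g (y i)) := by
  obtain ⟨a, ha, hfix, hxy⟩ := h
  subst hB
  refine ⟨g * a * g⁻¹, G.mul_mem (G.mul_mem hg ha) (G.inv_mem hg), ?_, fun i => ?_⟩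
  · simp only [Finset.mem_image, forall_exists_index, and_imp]
    rintro _ m hm rfl
    simp [hfix m hm]
  · simp [hxy i]

end SameTypeOver

lemma sameTypeOver_conj {G : Subgroup (Equiv.Perm M)} {g a : Equiv.Perm M} (hg : g ∈ G)
    (ha : a ∈ G) {B : Finset M} (hB : ∀ m ∈ B, a m = m) (hB' : ∀ m ∈ B.image ⇑g⁻¹, a m = m)
    {n : ℕ} (x : Fin n → M) :
    SameTypeOver G B (fun i => g (x i)) (fun i => (a * g * a⁻¹) (x i)) := by
  refine ⟨a * g * a⁻¹ * g⁻¹,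
    G.mul_mem (G.mul_mem (G.mul_mem ha hg) (G.inv_mem ha)) (G.inv_mem hg), fun m hm => ?_,
    fun i => by simp⟩
  have hfix : a⁻¹ (g⁻¹ m) = g⁻¹ m :=
    Equiv.Perm.inv_eq_iff_eq.2 (hB' _ (Finset.mem_image_of_mem _ hm)).symm
  simp only [Equiv.Perm.mul_apply, hfix]
  simp [hB m hm]

namespace IsSWIR

variable {G : Subgroup (Equiv.Perm M)} {indep : Finset M → Finset M → Finset M → Prop}

lemma indep_of_subset_left (h : IsSWIR G indep) {A B C U : Finset M} (hU : indep U B C)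
    (hA : A ⊆ U) : indep A B C :=
  (h.monotone_left A B C U (by rwa [Finset.union_eq_right.mpr hA])).1

lemma indep_of_subset_right (h : IsSWIR G indep) {A B D U : Finset M} (hU : indep A B U)
    (hD : D ⊆ U) : indep A B D :=
  (h.monotone_right A B D U (by rwa [Finset.union_eq_right.mpr hD])).1

lemma indep_union_of_subset_right (h : IsSWIR G indep) {A B C D U : Finset M}
    (hU : indep A B U) (hC : C ⊆ U) (hD : D ⊆ U) : indep A (B ∪ C) D :=
  (h.monotone_right A B C D (h.indep_of_subset_right hU (Finset.union_subset hC hD))).2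

lemma indep_tset_map (h : IsSWIR G indep) {a : Equiv.Perm M} (ha : a ∈ G) {n : ℕ}
    {x y : Fin n → M} {B : Finset M} (hxy : indep (tset x) B (tset y)) :
    indep (tset fun i => a (x i)) (B.image a) (tset fun i => a (y i)) := by
  simpa only [tset_comp] using h.invariance a ha _ _ _ hxy

end IsSWIR

section

variable {G : Subgroup (Equiv.Perm M)} {indep : Finset M → Finset M → Finset M → Prop}

/-- Realise the type of `x` together with an enumeration of `Z` as `b t` with `g (b t) ⫫_B b t`;
pulling back along `b` gives `b⁻¹ g b x ⫫_B Z`. -/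
lemma MovesAlmostLMax.exists_conj_indep {g : Equiv.Perm M} (hL : MovesAlmostLMax G indep g)
    (h : IsSWIR G indep) (B Z : Finset M) {n : ℕ} (x : Fin n → M) :
    ∃ a ∈ G, (∀ m ∈ B, a m = m) ∧ indep (tset fun i => (a * g * a⁻¹) (x i)) B Z := by
  obtain ⟨k, e, rfl⟩ := exists_tset_eq Z
  obtain ⟨u, ⟨b, hb, hbB, hbu⟩, hu⟩ := hL B (n + k) (Fin.append x e)
  have hbinv : ∀ m ∈ B, b⁻¹ m = m := fun m hm => Equiv.Perm.inv_eq_iff_eq.2 (hbB m hm).symm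
  have hpull := h.indep_tset_map (G.inv_mem hb) hu
  have hu' : (fun j => b⁻¹ (u j)) = Fin.append x e := by
    funext j; exact Equiv.Perm.inv_eq_iff_eq.2 (hbu j).symm
  rw [hu', Finset.image_congr hbinv, Finset.image_id', tset_append] at hpull
  refine ⟨b⁻¹, G.inv_mem hb, hbinv, ?_⟩
  refine h.indep_of_subset_right (h.indep_of_subset_left hpull ?_) Finset.subset_union_right
  intro m hm
  obtain ⟨i, -, rfl⟩ := Finset.mem_image.mp hm
  refine Finset.mem_image.mpr ⟨Fin.castAdd k i, Finset.mem_univ _, ?_⟩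
  simp [← hbu]

lemma MovesAlmostLMax.exists_conj_indep_of_indep {g : Equiv.Perm M}
    (hL : MovesAlmostLMax G indep g) (h : IsSWIR G indep) (hg : g ∈ G) {Y Y' Z : Finset M}
    (hY : Y.image g = Y') (hYZ : indep Y Y' Z) {n : ℕ} (x : Fin n → M) :
    ∃ a ∈ G, (∀ m ∈ Y ∪ Y', a m = m) ∧ indep (tset fun i => (a * g * a⁻¹) (x i)) Y' Z ∧
      SameTypeOver G Y' (fun i => g (x i)) (fun i => (a * g * a⁻¹) (x i)) := by
  obtain ⟨a, ha, hfix, hind⟩ := hL.exists_conj_indep h (Y ∪ Y') Z x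
  refine ⟨a, ha, hfix, h.trans_left Y Y' Z _ hYZ hind,
    sameTypeOver_conj hg ha (fun m hm => hfix m (Finset.mem_union_right _ hm)) ?_ x⟩
  rw [Finset.image_perm_inv_of_image_eq hY]
  exact fun m hm => hfix m (Finset.mem_union_left _ hm)

/-- If `b x ⫫_{B ∪ C} g (b x)` with `b` fixing `B ∪ C`, then `v := b⁻¹ g b x ≡_B g x ≡_B y` and
`x ⫫_B v`; since also `x ⫫_B y`, stationarity gives `c` fixing `B` and `x` with `c v = y`. -/
lemma MovesAlmostRMax.exists_conj_apply_eq {g : Equiv.Perm M} (hR : MovesAlmostRMax G indep g)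
    (h : IsSWIR G indep) (hg : g ∈ G) {B C : Finset M} (hC : B.image ⇑g⁻¹ ⊆ B ∪ C) {n : ℕ}
    {x y : Fin n → M} (hxC : indep (tset x) B C) (hxy : indep (tset x) B (tset y))
    (htp : SameTypeOver G B (fun i => g (x i)) y) :
    ∃ a ∈ G, (∀ m ∈ B, a m = m) ∧ ∀ i, (a * g * a⁻¹) (x i) = y i := by
  obtain ⟨u, ⟨b, hb, hbBC, hbu⟩, hu⟩ := hR (B ∪ C) n x
  have hbinv : ∀ m ∈ B ∪ C, b⁻¹ m = m := fun m hm => Equiv.Perm.inv_eq_iff_eq.2 (hbBC m hm).symm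
  set v : Fin n → M := fun i => (b⁻¹ * g * b) (x i) with hv
  have hpull := h.indep_tset_map (G.inv_mem hb) hu
  have hu' : (fun i => b⁻¹ (u i)) = x := by
    funext i; exact Equiv.Perm.inv_eq_iff_eq.2 (hbu i).symm
  have hv' : (fun i => b⁻¹ (g (u i))) = v := by
    funext i; simp [hv, ← hbu]
  rw [hu', hv', Finset.image_congr hbinv, Finset.image_id'] at hpull
  have hxv : indep (tset x) B (tset v) := h.trans_right _ B C _ hxC hpull
  have hvy : SameTypeOver G B v y :=
    (sameTypeOver_conj hg (G.inv_mem hb) (fun m hm => hbinv m (Finset.mem_union_left _ hm))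
      (fun m hm => hbinv m (hC hm)) x).symm.trans htp
  obtain ⟨c, hc, hcB, hcv⟩ := h.stationary_left B (tset x) n v y hvy hxv hxy
  have hcx : ∀ i, c⁻¹ (x i) = x i := fun i =>
    Equiv.Perm.inv_eq_iff_eq.2 (hcB _ (Finset.mem_union_right _ (mem_tset x i))).symm
  refine ⟨c * b⁻¹, G.mul_mem hc (G.inv_mem hb),
    fun m hm => by
      rw [Equiv.Perm.mul_apply, hbinv m (Finset.mem_union_left _ hm),
        hcB m (Finset.mem_union_left _ hm)],
    fun i => ?_⟩
  rw [← hcv i]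
  simp only [hv, mul_inv_rev, inv_inv, Equiv.Perm.mul_apply, hcx i]

lemma MovesAlmostRMax.exists_conj_apply_eq_of_indep {g : Equiv.Perm M}
    (hR : MovesAlmostRMax G indep g) (h : IsSWIR G indep) (hg : g ∈ G) {Y Y' C : Finset M}
    (hY : Y.image g = Y') {n : ℕ} {x y : Fin n → M} (hC : Y' ∪ Y.image ⇑g⁻¹ ∪ tset y ⊆ C)
    (hxC : indep (tset x) Y C) (hy : indep (tset y) Y' Y)
    (htp : SameTypeOver G Y' (fun i => g (x i)) y) :
    ∃ a ∈ G, (∀ m ∈ Y ∪ Y', a m = m) ∧ ∀ i, (a * g * a⁻¹) (x i) = y i := by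
  have hY' : Y' ⊆ C := (Finset.subset_union_left.trans Finset.subset_union_left).trans hC
  have hYg : Y.image ⇑g⁻¹ ⊆ C := (Finset.subset_union_right.trans Finset.subset_union_left).trans hC
  have hy' : tset y ⊆ C := Finset.subset_union_right.trans hC
  have hgx : indep (tset fun i => g (x i)) Y' Y := by
    have := h.invariance g hg _ _ _ (h.indep_of_subset_right hxC hYg)
    rw [← tset_comp, hY, Finset.image_image] at this
    simpa [Function.comp_def] using this
  have htp' : SameTypeOver G (Y ∪ Y') (fun i => g (x i)) y := by
    rw [Finset.union_comm]
    exact h.stationary_right Y' Y n _ y htp hgx hy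
  refine hR.exists_conj_apply_eq h hg (C := Y.image ⇑g⁻¹) ?_
    (h.indep_union_of_subset_right hxC hY' hYg) (h.indep_union_of_subset_right hxC hY' hy') htp'
  rw [Finset.image_union, Finset.image_perm_inv_of_image_eq hY, Finset.union_comm]
  exact Finset.union_subset_union_left Finset.subset_union_left

end

theorem swir_four_step_general {M : Type*} [DecidableEq M]
    (G : Subgroup (Equiv.Perm M)) (indep : Finset M → Finset M → Finset M → Prop)
    (hswir : IsSWIR G indep)
    (g1 g2 g3 g4 : Equiv.Perm M)
    (hg1 : g1 ∈ G) (hg2 : g2 ∈ G) (hg3 : g3 ∈ G) (hg4 : g4 ∈ G)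
    (hL1 : MovesAlmostLMax G indep g1) (hL4 : MovesAlmostLMax G indep g4⁻¹)
    (hR2 : MovesAlmostRMax G indep g2⁻¹) (hR3 : MovesAlmostRMax G indep g3)
    (Y0 Y1 Y2 Y3 Y4 : Finset M)
    (e1 : Y0.image ⇑g1 = Y1) (e2 : Y1.image ⇑g2 = Y2)
    (e3 : Y2.image ⇑g3 = Y3) (e4 : Y3.image ⇑g4 = Y4)
    (i1 : indep Y0 Y1 Y2) (i2 : indep Y4 Y3 Y2)
    (n : ℕ) (x0 x4 : Fin n → M)
    (htp : SameTypeOver G Y4 (fun i => (g4 * g3 * g2 * g1) (x0 i)) x4) :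
    ∃ a1 ∈ G, ∃ a2 ∈ G, ∃ a3 ∈ G, ∃ a4 ∈ G,
      (∀ m ∈ Y0 ∪ Y1, a1 m = m) ∧ (∀ m ∈ Y1 ∪ Y2, a2 m = m) ∧
      (∀ m ∈ Y2 ∪ Y3, a3 m = m) ∧ (∀ m ∈ Y3 ∪ Y4, a4 m = m) ∧
      ∀ i, ((a4 * g4 * a4⁻¹) * (a3 * g3 * a3⁻¹) * (a2 * g2 * a2⁻¹) *
        (a1 * g1 * a1⁻¹)) (x0 i) = x4 i := by
  have e2' := Finset.image_perm_inv_of_image_eq e2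
  have e4' := Finset.image_perm_inv_of_image_eq e4
  obtain ⟨a1, ha1, hfix1, hx1Y2, htp1⟩ := hL1.exists_conj_indep_of_indep hswir hg1 e1 i1 x0
  obtain ⟨a4, ha4, hfix4, hx3Y2, htp4⟩ :=
    hL4.exists_conj_indep_of_indep hswir (G.inv_mem hg4) e4' i2 x4
  set x1 : Fin n → M := fun i => (a1 * g1 * a1⁻¹) (x0 i)
  set x3 : Fin n → M := fun i => (a4 * g4⁻¹ * a4⁻¹) (x4 i)
  obtain ⟨x2, hx2, hx2C⟩ := hswir.exists_right Y2
    ((Y1 ∪ Y2.image ⇑g2 ∪ tset x1) ∪ (Y3 ∪ Y2.image ⇑g3⁻¹ ∪ tset x3)) n (fun i => g2 (x1 i))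
  have htp2 : SameTypeOver G Y1 (fun i => g2⁻¹ (x2 i)) x1 := by
    simpa using (hx2.map (G.inv_mem hg2) e2').symm
  have htp3 : SameTypeOver G Y3 (fun i => g3 (x2 i)) x3 := by
    have h0 := htp.map (G.inv_mem hg4) e4'
    simp only [Equiv.Perm.mul_apply, Equiv.Perm.coe_inv, Equiv.symm_apply_apply] at h0
    exact (hx2.map hg3 e3).symm.trans (((htp1.map hg2 e2).map hg3 e3).symm.trans (h0.trans htp4))
  obtain ⟨a2, ha2, hfix2, hx21⟩ := hR2.exists_conj_apply_eq_of_indep hswir (G.inv_mem hg2) e2'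
    (by rw [inv_inv]; exact Finset.subset_union_left) hx2C hx1Y2 htp2
  obtain ⟨a3, ha3, hfix3, hx23⟩ := hR3.exists_conj_apply_eq_of_indep hswir hg3 e3
    Finset.subset_union_right hx2C hx3Y2 htp3
  refine ⟨a1, ha1, a2, ha2, a3, ha3, a4, ha4, hfix1, Finset.union_comm Y2 Y1 ▸ hfix2, hfix3,
    Finset.union_comm Y4 Y3 ▸ hfix4, fun i => ?_⟩
  rw [Equiv.Perm.mul_apply, Equiv.Perm.mul_apply, Equiv.Perm.mul_apply,
    Equiv.Perm.conj_inv_apply_eq_iff.1 (hx21 i), hx23 i, Equiv.Perm.conj_inv_apply_eq_iff.1 rfl]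

/-- Proposition 2.9 (Proposition 3.4 of Tent–Ziegler, asymmetric form). -/
theorem swir_four_step {M : Type*} [DecidableEq M] [Countable M]
    (G : Subgroup (Equiv.Perm M)) (indep : Finset M → Finset M → Finset M → Prop)
    (hswir : IsSWIR G indep)
    (g1 g2 g3 g4 : Equiv.Perm M)
    (hg1 : g1 ∈ G) (hg2 : g2 ∈ G) (hg3 : g3 ∈ G) (hg4 : g4 ∈ G)
    (hL1 : MovesAlmostLMax G indep g1) (hL4 : MovesAlmostLMax G indep g4⁻¹)
    (hR2 : MovesAlmostRMax G indep g2⁻¹) (hR3 : MovesAlmostRMax G indep g3)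
    (Y0 Y1 Y2 Y3 Y4 : Finset M)
    (e1 : Y0.image ⇑g1 = Y1) (e2 : Y1.image ⇑g2 = Y2)
    (e3 : Y2.image ⇑g3 = Y3) (e4 : Y3.image ⇑g4 = Y4)
    (i1 : indep Y0 Y1 Y2) (i2 : indep Y4 Y3 Y2)
    (n : ℕ) (x0 x4 : Fin n → M)
    (htp : SameTypeOver G Y4 (fun i => (g4 * g3 * g2 * g1) (x0 i)) x4) :
    ∃ a1 ∈ G, ∃ a2 ∈ G, ∃ a3 ∈ G, ∃ a4 ∈ G,
      (∀ m ∈ Y0 ∪ Y1, a1 m = m) ∧ (∀ m ∈ Y1 ∪ Y2, a2 m = m) ∧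
      (∀ m ∈ Y2 ∪ Y3, a3 m = m) ∧ (∀ m ∈ Y3 ∪ Y4, a4 m = m) ∧
      ∀ i, ((a4 * g4 * a4⁻¹) * (a3 * g3 * a3⁻¹) * (a2 * g2 * a2⁻¹) *
        (a1 * g1 * a1⁻¹)) (x0 i) = x4 i :=
  swir_four_step_general G indep hswir g1 g2 g3 g4 hg1 hg2 hg3 hg4 hL1 hL4 hR2 hR3 Y0 Y1 Y2 Y3 Y4 e1
    e2 e3 e4 i1 i2 n x0 x4 htp
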